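/- arXiv:1603.02997 — 3 statements merged into one kernel-verified Lean document; each statement's English description precedes it below -/
import Mathlib

section
/- Let b ∈ (0,∞], let g ∈ L²(0,b), and set u(x) = ∫₀ˣ (x−t) g(t) dt for x ∈ (0,b). Then ∫₀ᵇ |u(x)|²/x⁴ dx ≤ (16/9) ∫₀ᵇ |g(t)|² dt. Consequently, for every ν ∈ [0,1), ∫₀ᵇ |ν² − 1/4|² |u(x)|²/x⁴ dx ≤ c² ∫₀ᵇ |g(t)|² dt with c = (4/3)|ν² − 1/4| < 1. -/
/-!
Since `|u(x)| ≤ ∫₀ˣ (x - t) |g(t)| dt`, this is a Schur test for the kernel `(x - t)₊ / x²`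
with weight `t^(-1/2)`. Cauchy–Schwarz against `∫₀ˣ (x - t) t^(-1/2) dt = (4/3) x^(3/2)` gives
`|u(x)|² / x⁴ ≤ (4/3) ∫₀ˣ (x - t) t^(1/2) x^(-5/2) |g(t)|² dt`, and after exchanging the
integrals `∫ₜ^∞ (x - t) t^(1/2) x^(-5/2) dx = 4/3`.
-/

open MeasureTheory Set Filter
open scoped ENNReal

lemma lintegral_Ioo_sub_mul_rpow {a x : ℝ} (ha : -1 < a) (hx : 0 ≤ x) :
    ∫⁻ t in Ioo 0 x, ENNReal.ofReal ((x - t) * t ^ a) =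
      ENNReal.ofReal (x ^ (a + 2) / ((a + 1) * (a + 2))) := by
  have hsplit : EqOn (fun t : ℝ => (x - t) * t ^ a) (fun t => x * t ^ a - t ^ (a + 1))
      (uIcc 0 x) := fun t ht => by
    rw [uIcc_of_le hx] at ht
    dsimp only
    rw [Real.rpow_add_one' ht.1 (by linarith)]
    ring
  have hint : IntervalIntegrable (fun t : ℝ => (x - t) * t ^ a) volume 0 x :=
    (intervalIntegral.intervalIntegrable_rpow' ha).continuousOn_mul
      (continuousOn_const.sub continuousOn_id)
  have hval : ∫ t in (0:ℝ)..x, (x - t) * t ^ a = x ^ (a + 2) / ((a + 1) * (a + 2)) := by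
    rw [intervalIntegral.integral_congr hsplit, intervalIntegral.integral_sub
      ((intervalIntegral.intervalIntegrable_rpow' ha).const_mul x)
      (intervalIntegral.intervalIntegrable_rpow' (by linarith)),
      intervalIntegral.integral_const_mul, integral_rpow (Or.inl ha),
      integral_rpow (Or.inl (by linarith)), Real.zero_rpow (by linarith),
      Real.zero_rpow (by linarith), show a + 1 + 1 = a + 2 by ring,
      show a + 2 = a + 1 + 1 by ring, Real.rpow_add_one' hx (y := a + 1) (by linarith)]
    have : a + 1 ≠ 0 := by linarith
    have : a + 1 + 1 ≠ 0 := by linarith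
    field_simp
    ring
  rw [← ofReal_integral_eq_lintegral_ofReal (hint.1.mono_set Ioo_subset_Ioc_self)
    ((ae_restrict_mem measurableSet_Ioo).mono fun t ht =>
      mul_nonneg (by linarith [ht.2]) (Real.rpow_nonneg ht.1.le a)),
    ← integral_Ioc_eq_integral_Ioo, ← intervalIntegral.integral_of_le hx, hval]

lemma lintegral_Ioi_sub_mul_rpow {a t : ℝ} (ha : a < -2) (ht : 0 < t) :
    ∫⁻ x in Ioi t, ENNReal.ofReal ((x - t) * x ^ a) =
      ENNReal.ofReal (t ^ (a + 2) / ((a + 1) * (a + 2))) := by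
  have hsplit : EqOn (fun x : ℝ => (x - t) * x ^ a) (fun x => x ^ (a + 1) - t * x ^ a)
      (Ioi t) := fun x hx => by
    dsimp only
    rw [Real.rpow_add_one' (ht.trans hx).le (by linarith)]
    ring
  have hint₁ : IntegrableOn (fun x : ℝ => x ^ (a + 1)) (Ioi t) :=
    integrableOn_Ioi_rpow_of_lt (by linarith) ht
  have hint₂ : IntegrableOn (fun x : ℝ => t * x ^ a) (Ioi t) :=
    (integrableOn_Ioi_rpow_of_lt (by linarith) ht).const_mul t
  have hint : IntegrableOn (fun x : ℝ => (x - t) * x ^ a) (Ioi t) :=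
    (hint₁.sub hint₂).congr_fun hsplit.symm measurableSet_Ioi
  rw [← ofReal_integral_eq_lintegral_ofReal hint
    ((ae_restrict_mem measurableSet_Ioi).mono fun x hx =>
      mul_nonneg (by linarith [mem_Ioi.mp hx]) (Real.rpow_nonneg (ht.trans hx).le a)),
    setIntegral_congr_fun measurableSet_Ioi hsplit, integral_sub hint₁ hint₂,
    integral_const_mul, integral_Ioi_rpow_of_lt (by linarith) ht,
    integral_Ioi_rpow_of_lt (by linarith) ht, show a + 1 + 1 = a + 2 by ring,
    show a + 2 = a + 1 + 1 by ring, Real.rpow_add_one' ht.le (by linarith)]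
  congr 1
  have : a + 1 ≠ 0 := by linarith
  have : a + 1 + 1 ≠ 0 := by linarith
  field_simp
  ring

theorem sq_lintegral_le_mul_of_sq_le {α : Type*} [MeasurableSpace α] {μ : Measure α}
    {f g h : α → ℝ≥0∞} (hf : AEMeasurable f μ) (hg : AEMeasurable g μ)
    (hfgh : ∀ᵐ a ∂μ, h a ^ 2 ≤ f a * g a) :
    (∫⁻ a, h a ∂μ) ^ 2 ≤ (∫⁻ a, f a ∂μ) * ∫⁻ a, g a ∂μ := by
  have hle : ∫⁻ a, h a ∂μ ≤ (∫⁻ a, f a ∂μ) ^ (1/2 : ℝ) * (∫⁻ a, g a ∂μ) ^ (1/2 : ℝ) := by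
    refine (lintegral_mono_ae (hfgh.mono fun a ha => ?_)).trans
      (ENNReal.lintegral_mul_norm_pow_le hf hg (by norm_num) (by norm_num) (by norm_num))
    calc h a = (h a ^ 2) ^ (1/2 : ℝ) := by
          rw [← ENNReal.rpow_natCast, ← ENNReal.rpow_mul]; norm_num
      _ ≤ (f a * g a) ^ (1/2 : ℝ) := ENNReal.rpow_le_rpow ha (by norm_num)
      _ = f a ^ (1/2 : ℝ) * g a ^ (1/2 : ℝ) := ENNReal.mul_rpow_of_nonneg _ _ (by norm_num)
  calc (∫⁻ a, h a ∂μ) ^ 2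
      ≤ ((∫⁻ a, f a ∂μ) ^ (1/2 : ℝ) * (∫⁻ a, g a ∂μ) ^ (1/2 : ℝ)) ^ 2 :=
        pow_le_pow_left₀ zero_le hle 2
    _ = (∫⁻ a, f a ∂μ) * ∫⁻ a, g a ∂μ := by
        rw [mul_pow, ← ENNReal.rpow_natCast, ← ENNReal.rpow_natCast, ← ENNReal.rpow_mul,
          ← ENNReal.rpow_mul]
        norm_num

lemma enorm_intervalIntegral_sub_mul_le {x : ℝ} (hx : 0 ≤ x) (g : ℝ → ℂ) :
    ‖∫ t in (0:ℝ)..x, ((x - t : ℝ) : ℂ) * g t‖ₑ ≤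
      ∫⁻ t in Ioo 0 x, ENNReal.ofReal (x - t) * ‖g t‖ₑ := by
  rw [intervalIntegral.integral_of_le hx, setLIntegral_congr Ioo_ae_eq_Ioc]
  refine (enorm_integral_le_lintegral_enorm _).trans_eq
    (setLIntegral_congr_fun measurableSet_Ioc fun t ht => ?_)
  rw [enorm_mul, ← ofReal_norm, Complex.norm_real, Real.norm_of_nonneg (sub_nonneg.mpr ht.2)]

lemma sq_lintegral_sub_mul_le {x : ℝ} (hx : 0 ≤ x) {G : ℝ → ℝ≥0∞}
    (hG : AEMeasurable G (volume.restrict (Ioo 0 x))) :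
    (∫⁻ t in Ioo 0 x, ENNReal.ofReal (x - t) * G t) ^ 2 ≤
      ENNReal.ofReal (4/3 * x ^ (3/2 : ℝ)) *
        ∫⁻ t in Ioo 0 x, ENNReal.ofReal ((x - t) * t ^ (1/2 : ℝ)) * G t ^ 2 := by
  have hweight : ∫⁻ t in Ioo 0 x, ENNReal.ofReal ((x - t) * t ^ (-(1/2) : ℝ)) =
      ENNReal.ofReal (4/3 * x ^ (3/2 : ℝ)) := by
    rw [lintegral_Ioo_sub_mul_rpow (by norm_num) hx]
    congr 1
    norm_num
    ring
  rw [← hweight]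
  refine sq_lintegral_le_mul_of_sq_le (by fun_prop) (by fun_prop) ?_
  filter_upwards [ae_restrict_mem measurableSet_Ioo] with t ht
  refine le_of_eq ?_
  have hrpow : t ^ (-(1/2) : ℝ) * t ^ (1/2 : ℝ) = 1 := by
    rw [← Real.rpow_add ht.1]; norm_num
  rw [← mul_assoc, ← ENNReal.ofReal_mul (mul_nonneg (sub_nonneg.mpr ht.2.le)
    (Real.rpow_nonneg ht.1.le _)), mul_pow, ← ENNReal.ofReal_pow (sub_nonneg.mpr ht.2.le)]
  congr 2
  linear_combination -(x - t) ^ 2 * hrpow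

/-- The kernel `(x - t)₊ / x²` of `g ↦ u / x²`, multiplied by the Schur test weight
`(t / x) ^ (1/2)`; `ENNReal.ofReal` makes it vanish for `0 < x ≤ t`. -/
noncomputable def schurKernel (x t : ℝ) : ℝ≥0∞ :=
  ENNReal.ofReal (x ^ (-(5/2) : ℝ) * ((x - t) * t ^ (1/2 : ℝ)))

lemma measurable_uncurry_schurKernel : Measurable (Function.uncurry schurKernel) := by
  unfold schurKernel Function.uncurry
  fun_prop

lemma ofReal_norm_sq_div_pow_four_le {x : ℝ} (hx : 0 < x) {g : ℝ → ℂ}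
    (hg : AEMeasurable g (volume.restrict (Ioo 0 x))) :
    ENNReal.ofReal (‖∫ t in (0:ℝ)..x, ((x - t : ℝ) : ℂ) * g t‖ ^ 2 / x ^ 4) ≤
      ENNReal.ofReal (4/3) * ∫⁻ t in Ioo 0 x, schurKernel x t * ‖g t‖ₑ ^ 2 := by
  set I := ∫ t in (0:ℝ)..x, ((x - t : ℝ) : ℂ) * g t
  have hI : ‖I‖ₑ ^ 2 ≤ ENNReal.ofReal (4/3 * x ^ (3/2 : ℝ)) *
      ∫⁻ t in Ioo 0 x, ENNReal.ofReal ((x - t) * t ^ (1/2 : ℝ)) * ‖g t‖ₑ ^ 2 :=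
    (pow_le_pow_left₀ zero_le (enorm_intervalIntegral_sub_mul_le hx.le g) 2).trans
      (sq_lintegral_sub_mul_le hx.le hg.enorm)
  calc ENNReal.ofReal (‖I‖ ^ 2 / x ^ 4) = ENNReal.ofReal (x ^ (-4 : ℝ)) * ‖I‖ₑ ^ 2 := by
        rw [← ofReal_norm, ← ENNReal.ofReal_pow (norm_nonneg _),
          ← ENNReal.ofReal_mul (by positivity), Real.rpow_neg hx.le]
        norm_num [div_eq_inv_mul]
    _ ≤ ENNReal.ofReal (x ^ (-4 : ℝ)) * (ENNReal.ofReal (4/3 * x ^ (3/2 : ℝ)) *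
          ∫⁻ t in Ioo 0 x, ENNReal.ofReal ((x - t) * t ^ (1/2 : ℝ)) * ‖g t‖ₑ ^ 2) := by
        gcongr
    _ = ENNReal.ofReal (4/3) * ∫⁻ t in Ioo 0 x, ENNReal.ofReal (x ^ (-(5/2) : ℝ)) *
          (ENNReal.ofReal ((x - t) * t ^ (1/2 : ℝ)) * ‖g t‖ₑ ^ 2) := by
        rw [lintegral_const_mul' _ _ ENNReal.ofReal_ne_top, ← mul_assoc, ← mul_assoc,
          ← ENNReal.ofReal_mul (by positivity), ← ENNReal.ofReal_mul (by positivity),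
          mul_left_comm, ← Real.rpow_add hx]
        norm_num
    _ = ENNReal.ofReal (4/3) * ∫⁻ t in Ioo 0 x, schurKernel x t * ‖g t‖ₑ ^ 2 := by
        simp only [schurKernel, ENNReal.ofReal_mul (Real.rpow_nonneg hx.le _), mul_assoc]

lemma lintegral_Ioi_schurKernel {t : ℝ} (ht : 0 < t) :
    ∫⁻ x in Ioi 0, schurKernel x t = ENNReal.ofReal (4/3) := by
  have hzero : ∫⁻ x in Ioc 0 t, schurKernel x t = 0 := by
    refine (setLIntegral_congr_fun measurableSet_Ioc fun x hx => ?_).trans lintegral_zero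
    exact ENNReal.ofReal_eq_zero.mpr (mul_nonpos_of_nonneg_of_nonpos
      (Real.rpow_nonneg hx.1.le _)
      (mul_nonpos_of_nonpos_of_nonneg (sub_nonpos.mpr hx.2) (Real.rpow_nonneg ht.le _)))
  have htail : ∫⁻ x in Ioi t, schurKernel x t = ENNReal.ofReal (4/3) := by
    calc ∫⁻ x in Ioi t, schurKernel x t
        = ∫⁻ x in Ioi t, ENNReal.ofReal (t ^ (1/2 : ℝ)) *
            ENNReal.ofReal ((x - t) * x ^ (-(5/2) : ℝ)) :=
          lintegral_congr fun x => by
            rw [schurKernel, ← ENNReal.ofReal_mul (Real.rpow_nonneg ht.le _)]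
            ring_nf
      _ = ENNReal.ofReal (t ^ (1/2 : ℝ)) * ENNReal.ofReal (4/3 * t ^ (-(1/2) : ℝ)) := by
          rw [lintegral_const_mul' _ _ ENNReal.ofReal_ne_top,
            lintegral_Ioi_sub_mul_rpow (by norm_num) ht]
          congr 2
          norm_num
          ring
      _ = ENNReal.ofReal (4/3) := by
          rw [← ENNReal.ofReal_mul (by positivity), mul_left_comm, ← Real.rpow_add ht]
          norm_num
  rw [← Ioc_union_Ioi_eq_Ioi ht.le, lintegral_union measurableSet_Ioi Ioc_disjoint_Ioi_same,
    hzero, htail, zero_add]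

theorem lintegral_norm_sq_div_pow_four_le {S : Set ℝ} (hSm : MeasurableSet S)
    (hS0 : S ⊆ Ioi 0) (hSI : ∀ x ∈ S, Ioo 0 x ⊆ S) {g : ℝ → ℂ}
    (hg : AEMeasurable g (volume.restrict S)) :
    ∫⁻ x in S, ENNReal.ofReal (‖∫ t in (0:ℝ)..x, ((x - t : ℝ) : ℂ) * g t‖ ^ 2 / x ^ 4) ≤
      ENNReal.ofReal (16/9) * ∫⁻ t in S, ENNReal.ofReal (‖g t‖ ^ 2) := by
  have hprod : AEMeasurable (Function.uncurry fun x t => schurKernel x t * ‖g t‖ₑ ^ 2)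
      ((volume.restrict S).prod (volume.restrict S)) :=
    measurable_uncurry_schurKernel.aemeasurable.mul
      ((hg.enorm.pow_const 2).comp_quasiMeasurePreserving Measure.quasiMeasurePreserving_snd)
  calc ∫⁻ x in S, ENNReal.ofReal (‖∫ t in (0:ℝ)..x, ((x - t : ℝ) : ℂ) * g t‖ ^ 2 / x ^ 4)
      ≤ ∫⁻ x in S, ENNReal.ofReal (4/3) * ∫⁻ t in S, schurKernel x t * ‖g t‖ₑ ^ 2 :=
        setLIntegral_mono' hSm fun x hx =>
          (ofReal_norm_sq_div_pow_four_le (hS0 hx) (hg.mono_measure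
            (Measure.restrict_mono (hSI x hx) le_rfl))).trans
          (by gcongr; exact hSI x hx)
    _ = ENNReal.ofReal (4/3) * ∫⁻ t in S, (∫⁻ x in S, schurKernel x t) * ‖g t‖ₑ ^ 2 := by
        rw [lintegral_const_mul' _ _ ENNReal.ofReal_ne_top, lintegral_lintegral_swap hprod]
        congr 1
        exact lintegral_congr fun t => lintegral_mul_const _
          (measurable_uncurry_schurKernel.comp measurable_prodMk_right)
    _ ≤ ENNReal.ofReal (4/3) * ∫⁻ t in S, ENNReal.ofReal (4/3) * ‖g t‖ₑ ^ 2 := by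
        gcongr _ * ?_
        refine setLIntegral_mono' hSm fun t ht => ?_
        gcongr
        exact (lintegral_mono_set hS0).trans_eq (lintegral_Ioi_schurKernel (hS0 ht))
    _ = ENNReal.ofReal (16/9) * ∫⁻ t in S, ENNReal.ofReal (‖g t‖ ^ 2) := by
        rw [lintegral_const_mul' _ _ ENNReal.ofReal_ne_top, ← mul_assoc,
          ← ENNReal.ofReal_mul (by norm_num)]
        norm_num [ENNReal.ofReal_pow, ofReal_norm]

/-- Let `b ∈ (0,∞]` (the set `S` is `(0,b)` for finite `b > 0`, or the whole half-line
`(0,∞)`), let `g ∈ L²(0,b)` and `u(x) = ∫₀ˣ (x−t) g(t) dt`. Then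
`∫₀ᵇ |u(x)|²/x⁴ dx ≤ (16/9) ∫₀ᵇ |g|²`; consequently, for every `ν ∈ [0,1)`,
`∫₀ᵇ |ν²−1/4|² |u(x)|²/x⁴ dx ≤ c² ∫₀ᵇ |g|²` with `c = (4/3)|ν²−1/4| < 1`. -/
theorem stmt3 (S : Set ℝ) (hS : S = Ioi (0:ℝ) ∨ ∃ b : ℝ, 0 < b ∧ S = Ioo 0 b)
    (g : ℝ → ℂ) (hg : MemLp g 2 (volume.restrict S))
    (u : ℝ → ℂ) (hu : ∀ x ∈ S, u x = ∫ t in (0:ℝ)..x, ((x - t : ℝ) : ℂ) * g t) :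
    (∫⁻ x in S, ENNReal.ofReal (‖u x‖ ^ 2 / x ^ 4)
      ≤ ENNReal.ofReal (16/9) * ∫⁻ t in S, ENNReal.ofReal (‖g t‖ ^ 2)) ∧
    ∀ ν : ℝ, ν ∈ Ico (0:ℝ) 1 →
      (∫⁻ x in S, ENNReal.ofReal (|ν ^ 2 - 1/4| ^ 2 * (‖u x‖ ^ 2 / x ^ 4))
        ≤ ENNReal.ofReal (((4/3) * |ν ^ 2 - 1/4|) ^ 2)
            * ∫⁻ t in S, ENNReal.ofReal (‖g t‖ ^ 2)) ∧
      (4/3) * |ν ^ 2 - 1/4| < 1 := by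
  obtain ⟨hSm, hS0, hSI⟩ : MeasurableSet S ∧ S ⊆ Ioi 0 ∧ ∀ x ∈ S, Ioo 0 x ⊆ S := by
    rcases hS with rfl | ⟨b, -, rfl⟩
    · exact ⟨measurableSet_Ioi, subset_rfl, fun _ _ => Ioo_subset_Ioi_self⟩
    · exact ⟨measurableSet_Ioo, Ioo_subset_Ioi_self, fun _ hx => Ioo_subset_Ioo_right hx.2.le⟩
  have hmain : ∫⁻ x in S, ENNReal.ofReal (‖u x‖ ^ 2 / x ^ 4)
      ≤ ENNReal.ofReal (16/9) * ∫⁻ t in S, ENNReal.ofReal (‖g t‖ ^ 2) := by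
    rw [setLIntegral_congr_fun hSm fun x hx => by rw [hu x hx]]
    exact lintegral_norm_sq_div_pow_four_le hSm hS0 hSI hg.aestronglyMeasurable.aemeasurable
  refine ⟨hmain, fun ν hν => ⟨?_, ?_⟩⟩
  · calc _ = ENNReal.ofReal (|ν ^ 2 - 1/4| ^ 2) *
            ∫⁻ x in S, ENNReal.ofReal (‖u x‖ ^ 2 / x ^ 4) := by
          simp only [ENNReal.ofReal_mul (sq_nonneg |ν ^ 2 - 1/4|),
            lintegral_const_mul' _ _ ENNReal.ofReal_ne_top]
      _ ≤ ENNReal.ofReal (|ν ^ 2 - 1/4| ^ 2) *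
            (ENNReal.ofReal (16/9) * ∫⁻ t in S, ENNReal.ofReal (‖g t‖ ^ 2)) := by
          gcongr
      _ = _ := by
          rw [← mul_assoc, ← ENNReal.ofReal_mul (sq_nonneg _)]
          ring_nf
  · have : |ν ^ 2 - 1/4| < 3/4 := abs_lt.mpr ⟨by nlinarith [hν.1], by nlinarith [hν.1, hν.2]⟩
    linarith
end

section
/- Let ν ∈ (0,1), let b ∈ (0,∞], and let u : (0,b) → ℂ satisfy u(x) = ∫₀ˣ u'(t) dt with u' ∈ L²(0,b). Then min{4ν², 1} · ∫₀ᵇ |u'(x)|² dx ≤ ∫₀ᵇ |u'(x)|² dx + (ν² − 1/4)∫₀ᵇ |u(x)|²/x² dx ≤ (1 + |4ν² − 1|) · ∫₀ᵇ |u'(x)|² dx. In particular, on functions vanishing at 0 the energy norm of the Bessel form with parameter ν ∈ (0,1) is equivalent to the H¹-seminorm. -/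
/-!
Both bounds follow from Hardy's inequality `∫ |u|² / x² ≤ 4 ∫ |u'|²` by distinguishing
`ν² ≤ 1/4` from `ν² ≥ 1/4`. Hardy's inequality is a Schur test: Cauchy–Schwarz with the weight
`t^(-1/2)` gives `|u x|² ≤ 2 √x ∫₀ˣ √t |u' t|² dt`, and after multiplying by `x⁻²` and swapping the
order of integration the inner integral is `∫ₜ^∞ 2 x^(-3/2) dx = 4 / √t`.
-/

open MeasureTheory Set Function
open scoped ENNReal

lemma lintegral_Ioc_zero_rpow {r : ℝ} (hr : -1 < r) {x : ℝ} (hx : 0 ≤ x) :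
    ∫⁻ t in Ioc 0 x, ENNReal.ofReal (t ^ r) = ENNReal.ofReal (x ^ (r + 1) / (r + 1)) := by
  have hint : IntegrableOn (fun t : ℝ => t ^ r) (Ioc 0 x) :=
    (intervalIntegrable_iff_integrableOn_Ioc_of_le hx).1
      (intervalIntegral.intervalIntegrable_rpow' hr)
  rw [← ofReal_integral_eq_lintegral_ofReal hint
    ((ae_restrict_iff' measurableSet_Ioc).2 (ae_of_all _ fun t ht => Real.rpow_nonneg ht.1.le r)),
    ← intervalIntegral.integral_of_le hx, integral_rpow (Or.inl hr),
    Real.zero_rpow (by linarith), sub_zero]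

lemma lintegral_Ioi_rpow_of_lt {r : ℝ} (hr : r < -1) {c : ℝ} (hc : 0 < c) :
    ∫⁻ x in Ioi c, ENNReal.ofReal (x ^ r) = ENNReal.ofReal (-c ^ (r + 1) / (r + 1)) := by
  have hnonneg : ∀ x ∈ Ioi c, 0 ≤ x ^ r := fun x hx => Real.rpow_nonneg (hc.trans hx).le r
  rw [← ofReal_integral_eq_lintegral_ofReal (integrableOn_Ioi_rpow_of_lt hr hc)
    ((ae_restrict_iff' measurableSet_Ioi).2 (ae_of_all _ hnonneg)), integral_Ioi_rpow_of_lt hr hc]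

lemma sq_lintegral_Ioc_le {f : ℝ → ℝ≥0∞} (hf : AEMeasurable f) {x : ℝ} (hx : 0 < x) :
    (∫⁻ t in Ioc 0 x, f t) ^ 2 ≤ ENNReal.ofReal (2 * x ^ (1 / 2 : ℝ)) *
      ∫⁻ t in Ioc 0 x, ENNReal.ofReal (t ^ (1 / 2 : ℝ)) * f t ^ 2 := by
  set w : ℝ → ℝ≥0∞ := fun t => ENNReal.ofReal (t ^ (-1 / 4 : ℝ))
  set g : ℝ → ℝ≥0∞ := fun t => ENNReal.ofReal (t ^ (1 / 4 : ℝ)) * f t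
  have hfwg : ∫⁻ t in Ioc 0 x, f t = ∫⁻ t in Ioc 0 x, (w * g) t := by
    refine setLIntegral_congr_fun measurableSet_Ioc fun t ht => ?_
    rw [Pi.mul_apply, ← mul_assoc, ← ENNReal.ofReal_mul (Real.rpow_nonneg ht.1.le _),
      ← Real.rpow_add ht.1]
    norm_num
  have hw : ∫⁻ t in Ioc 0 x, w t ^ (2 : ℝ) = ENNReal.ofReal (2 * x ^ (1 / 2 : ℝ)) := by
    rw [setLIntegral_congr_fun measurableSet_Ioc (g := fun t => ENNReal.ofReal (t ^ (-1 / 2 : ℝ)))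
      fun t ht => by
        rw [ENNReal.ofReal_rpow_of_nonneg (Real.rpow_nonneg ht.1.le _) zero_le_two,
          ← Real.rpow_mul ht.1.le]
        norm_num,
      lintegral_Ioc_zero_rpow (by norm_num) hx.le]
    congr 1
    norm_num
    ring
  have hg : ∫⁻ t in Ioc 0 x, g t ^ (2 : ℝ) =
      ∫⁻ t in Ioc 0 x, ENNReal.ofReal (t ^ (1 / 2 : ℝ)) * f t ^ 2 := by
    refine setLIntegral_congr_fun measurableSet_Ioc fun t ht => ?_
    rw [ENNReal.mul_rpow_of_nonneg _ _ zero_le_two,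
      ENNReal.ofReal_rpow_of_nonneg (Real.rpow_nonneg ht.1.le _) zero_le_two,
      ← Real.rpow_mul ht.1.le, ENNReal.rpow_two]
    norm_num
  have holder := ENNReal.lintegral_mul_le_Lp_mul_Lq (volume.restrict (Ioc 0 x))
    Real.HolderConjugate.two_two (by fun_prop : AEMeasurable w _) (by fun_prop : AEMeasurable g _)
  rw [hw, hg, ← hfwg] at holder
  calc (∫⁻ t in Ioc 0 x, f t) ^ 2 ≤ _ := pow_le_pow_left' holder 2
    _ = _ := by
      have hsq (a : ℝ≥0∞) : (a ^ (1 / 2 : ℝ)) ^ 2 = a := by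
        simpa using ENNReal.rpow_inv_natCast_pow two_ne_zero a
      rw [mul_pow, hsq, hsq]

lemma lintegral_lintegral_Ioc_swap {F : ℝ → ℝ → ℝ≥0∞}
    (hF : AEMeasurable (uncurry F) (volume.prod volume)) (a : ℝ) :
    ∫⁻ x, ∫⁻ t in Ioc a x, F x t = ∫⁻ t in Ioi a, ∫⁻ x in Ici t, F x t := by
  set T : Set (ℝ × ℝ) := {p | p.2 ∈ Ioc a p.1}
  have hT : MeasurableSet T :=
    (measurableSet_lt measurable_const measurable_snd).inter
      (measurableSet_le measurable_snd measurable_fst)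
  have hleft (x : ℝ) : ∫⁻ t in Ioc a x, F x t = ∫⁻ t, T.indicator (uncurry F) (x, t) := by
    rw [← lintegral_indicator measurableSet_Ioc]
    rfl
  have hright (t : ℝ) : (Ioi a).indicator (fun t => ∫⁻ x in Ici t, F x t) t =
      ∫⁻ x, T.indicator (uncurry F) (x, t) := by
    by_cases ht : t ∈ Ioi a
    · rw [indicator_of_mem ht, ← lintegral_indicator measurableSet_Ici]
      congr 1 with x
      by_cases hx : t ≤ x
      · simp [T, indicator_of_mem, mem_Ioi.1 ht, hx]
      · simp [T, hx]
    · rw [indicator_of_notMem ht]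
      simp_all [T]
  simp_rw [hleft, ← lintegral_indicator measurableSet_Ioi, hright]
  exact lintegral_lintegral_swap (hF.indicator hT)

theorem lintegral_sq_lintegral_Ioc_div_sq_le {f : ℝ → ℝ≥0∞} (hf : AEMeasurable f) :
    ∫⁻ x in Ioi 0, (∫⁻ t in Ioc 0 x, f t) ^ 2 / ENNReal.ofReal x ^ 2 ≤
      4 * ∫⁻ t in Ioi 0, f t ^ 2 := by
  have hpointwise : ∀ x ∈ Ioi (0 : ℝ), (∫⁻ t in Ioc 0 x, f t) ^ 2 / ENNReal.ofReal x ^ 2 ≤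
      ∫⁻ t in Ioc 0 x, ENNReal.ofReal (2 * x ^ (-3 / 2 : ℝ)) *
        (ENNReal.ofReal (t ^ (1 / 2 : ℝ)) * f t ^ 2) := by
    intro x hx
    have hweight : ENNReal.ofReal (2 * x ^ (1 / 2 : ℝ)) / ENNReal.ofReal x ^ 2 =
        ENNReal.ofReal (2 * x ^ (-3 / 2 : ℝ)) := by
      rw [← ENNReal.ofReal_pow hx.le, ← ENNReal.ofReal_div_of_pos (pow_pos hx 2), ← Real.rpow_two,
        mul_div_assoc, ← Real.rpow_sub hx]
      norm_num
    rw [lintegral_const_mul' _ _ ENNReal.ofReal_ne_top, ← hweight, ← ENNReal.mul_div_right_comm]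
    exact ENNReal.div_le_div_right (sq_lintegral_Ioc_le hf hx) _
  have htail : ∀ t ∈ Ioi (0 : ℝ), ∫⁻ x in Ici t, ENNReal.ofReal (2 * x ^ (-3 / 2 : ℝ)) =
      ENNReal.ofReal (4 * t ^ (-1 / 2 : ℝ)) := by
    intro t ht
    simp_rw [← setLIntegral_congr Ioi_ae_eq_Ici, ENNReal.ofReal_mul zero_le_two]
    rw [lintegral_const_mul' _ _ ENNReal.ofReal_ne_top, lintegral_Ioi_rpow_of_lt (by norm_num) ht,
      ← ENNReal.ofReal_mul zero_le_two]
    congr 1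
    norm_num
    ring
  have hmeas : AEMeasurable (uncurry fun x t => ENNReal.ofReal (2 * x ^ (-3 / 2 : ℝ)) *
      (ENNReal.ofReal (t ^ (1 / 2 : ℝ)) * f t ^ 2)) (volume.prod volume) := by
    have hg : AEMeasurable (fun t : ℝ => ENNReal.ofReal (t ^ (1 / 2 : ℝ)) * f t ^ 2) := by fun_prop
    exact (Measurable.aemeasurable (by fun_prop)).mul hg.comp_snd
  calc ∫⁻ x in Ioi 0, (∫⁻ t in Ioc 0 x, f t) ^ 2 / ENNReal.ofReal x ^ 2
      ≤ ∫⁻ x in Ioi 0, ∫⁻ t in Ioc 0 x, ENNReal.ofReal (2 * x ^ (-3 / 2 : ℝ)) *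
          (ENNReal.ofReal (t ^ (1 / 2 : ℝ)) * f t ^ 2) :=
        setLIntegral_mono' measurableSet_Ioi hpointwise
    _ ≤ ∫⁻ x, ∫⁻ t in Ioc 0 x, ENNReal.ofReal (2 * x ^ (-3 / 2 : ℝ)) *
          (ENNReal.ofReal (t ^ (1 / 2 : ℝ)) * f t ^ 2) := setLIntegral_le_lintegral _ _
    _ = ∫⁻ t in Ioi 0, ∫⁻ x in Ici t, ENNReal.ofReal (2 * x ^ (-3 / 2 : ℝ)) *
          (ENNReal.ofReal (t ^ (1 / 2 : ℝ)) * f t ^ 2) := lintegral_lintegral_Ioc_swap hmeas 0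
    _ = ∫⁻ t in Ioi 0, 4 * f t ^ 2 := by
      refine setLIntegral_congr_fun measurableSet_Ioi fun t ht => ?_
      rw [lintegral_mul_const _ (by fun_prop), htail t ht, ← mul_assoc, ← ENNReal.ofReal_mul
        (mul_nonneg zero_le_four (Real.rpow_nonneg (le_of_lt ht) _)),
        mul_right_comm, mul_assoc, ← Real.rpow_add ht]
      norm_num
    _ = 4 * ∫⁻ t in Ioi 0, f t ^ 2 := lintegral_const_mul' _ _ (by norm_num)

section

variable {E : Type*} [NormedAddCommGroup E] [NormedSpace ℝ E] {S : Set ℝ} {u u' : ℝ → E}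

theorem lintegral_enorm_sq_div_sq_le (hSm : MeasurableSet S) (hS₀ : S ⊆ Ioi 0)
    (hSIoc : ∀ x ∈ S, Ioc 0 x ⊆ S) (hu' : AEStronglyMeasurable u' (volume.restrict S))
    (hu : ∀ x ∈ S, u x = ∫ t in (0 : ℝ)..x, u' t) :
    ∫⁻ x in S, ‖u x‖ₑ ^ 2 / ENNReal.ofReal x ^ 2 ≤ 4 * ∫⁻ x in S, ‖u' x‖ₑ ^ 2 := by
  set f : ℝ → ℝ≥0∞ := S.indicator fun t => ‖u' t‖ₑ
  have hu_le : ∀ x ∈ S, ‖u x‖ₑ ≤ ∫⁻ t in Ioc 0 x, f t := fun x hx => by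
    rw [hu x hx, intervalIntegral.integral_of_le (hS₀ hx).le,
      setLIntegral_congr_fun measurableSet_Ioc fun t ht => indicator_of_mem (hSIoc x hx ht) _]
    exact enorm_integral_le_lintegral_enorm _
  have hf_sq : ∫⁻ t in Ioi 0, f t ^ 2 = ∫⁻ t in S, ‖u' t‖ₑ ^ 2 := by
    have : (fun t => f t ^ 2) = S.indicator fun t => ‖u' t‖ₑ ^ 2 := by
      ext t
      by_cases ht : t ∈ S <;> simp [f, ht]
    rw [this, lintegral_indicator hSm, Measure.restrict_restrict hSm, inter_eq_left.2 hS₀]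
  calc ∫⁻ x in S, ‖u x‖ₑ ^ 2 / ENNReal.ofReal x ^ 2
      ≤ ∫⁻ x in S, (∫⁻ t in Ioc 0 x, f t) ^ 2 / ENNReal.ofReal x ^ 2 :=
        setLIntegral_mono' hSm fun x hx => by gcongr; exact hu_le x hx
    _ ≤ ∫⁻ x in Ioi 0, (∫⁻ t in Ioc 0 x, f t) ^ 2 / ENNReal.ofReal x ^ 2 := lintegral_mono_set hS₀
    _ ≤ 4 * ∫⁻ t in S, ‖u' t‖ₑ ^ 2 :=
        hf_sq ▸ lintegral_sq_lintegral_Ioc_div_sq_le ((aemeasurable_indicator_iff hSm).2 hu'.enorm)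

theorem aestronglyMeasurable_of_eq_primitive (hSm : MeasurableSet S) (hS₀ : S ⊆ Ioi 0)
    (hSIoc : ∀ x ∈ S, Ioc 0 x ⊆ S) (hu' : MemLp u' 2 (volume.restrict S))
    (hu : ∀ x ∈ S, u x = ∫ t in (0 : ℝ)..x, u' t) :
    AEStronglyMeasurable u (volume.restrict S) := by
  set w := S.indicator u'
  have hw : LocallyIntegrable w :=
    ((memLp_indicator_iff_restrict hSm).2 hu').locallyIntegrable one_le_two
  have hw_int (a b : ℝ) : IntervalIntegrable w volume a b :=
    intervalIntegrable_iff.2 <| (hw.integrableOn_isCompact isCompact_uIcc).mono_set uIoc_subset_uIcc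
  refine (intervalIntegral.continuous_primitive hw_int 0).aestronglyMeasurable.congr ?_
  refine (ae_restrict_iff' hSm).2 (ae_of_all _ fun x hx => ?_)
  change ∫ t in (0 : ℝ)..x, w t = u x
  rw [hu x hx, intervalIntegral.integral_of_le (hS₀ hx).le,
    intervalIntegral.integral_of_le (hS₀ hx).le]
  exact setIntegral_congr_fun measurableSet_Ioc fun t ht => indicator_of_mem (hSIoc x hx ht) _

theorem integrableOn_norm_sq_div_sq_and_integral_le (hSm : MeasurableSet S) (hS₀ : S ⊆ Ioi 0)
    (hSIoc : ∀ x ∈ S, Ioc 0 x ⊆ S) (hu' : MemLp u' 2 (volume.restrict S))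
    (hu : ∀ x ∈ S, u x = ∫ t in (0 : ℝ)..x, u' t) :
    IntegrableOn (fun x => ‖u x‖ ^ 2 / x ^ 2) S ∧
      ∫ x in S, ‖u x‖ ^ 2 / x ^ 2 ≤ 4 * ∫ x in S, ‖u' x‖ ^ 2 := by
  have hu'_sq : IntegrableOn (fun x => ‖u' x‖ ^ 2) S :=
    (memLp_two_iff_integrable_sq_norm hu'.1).1 hu'
  have hlintegral : ∫⁻ x in S, ENNReal.ofReal (‖u x‖ ^ 2 / x ^ 2) ≤
      ENNReal.ofReal (4 * ∫ x in S, ‖u' x‖ ^ 2) := by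
    rw [setLIntegral_congr_fun hSm fun x hx => by
        rw [ENNReal.ofReal_div_of_pos (pow_pos (hS₀ hx) 2), ENNReal.ofReal_pow (norm_nonneg _),
          ENNReal.ofReal_pow (le_of_lt (hS₀ hx)), ofReal_norm],
      ENNReal.ofReal_mul zero_le_four,
      ofReal_integral_eq_lintegral_ofReal hu'_sq (ae_of_all _ fun x => sq_nonneg _)]
    simp_rw [ENNReal.ofReal_pow (norm_nonneg _), ofReal_norm]
    simpa using lintegral_enorm_sq_div_sq_le hSm hS₀ hSIoc hu'.1 hu
  have hnonneg : 0 ≤ᵐ[volume.restrict S] fun x => ‖u x‖ ^ 2 / x ^ 2 :=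
    ae_of_all _ fun x => by positivity
  have hint : IntegrableOn (fun x => ‖u x‖ ^ 2 / x ^ 2) S :=
    ⟨((aestronglyMeasurable_of_eq_primitive hSm hS₀ hSIoc hu' hu).norm.pow 2).div₀
        (aestronglyMeasurable_id.pow 2),
      (hasFiniteIntegral_iff_ofReal hnonneg).2 (hlintegral.trans_lt ENNReal.ofReal_lt_top)⟩
  refine ⟨hint, (ENNReal.ofReal_le_ofReal_iff ?_).1 ?_⟩
  · exact mul_nonneg zero_le_four (integral_nonneg fun x => sq_nonneg _)
  · rwa [ofReal_integral_eq_lintegral_ofReal hint hnonneg]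

end

lemma min_mul_le_add_mul_of_le_four_mul (ν : ℝ) {A B : ℝ} (hA : 0 ≤ A) (hB : 0 ≤ B)
    (hBA : B ≤ 4 * A) : min (4 * ν ^ 2) 1 * A ≤ A + (ν ^ 2 - 1 / 4) * B := by
  rcases le_total (ν ^ 2) (1 / 4) with hν | hν
  · calc min (4 * ν ^ 2) 1 * A ≤ 4 * ν ^ 2 * A := by gcongr; exact min_le_left _ _
      _ = A + (ν ^ 2 - 1 / 4) * (4 * A) := by ring
      _ ≤ A + (ν ^ 2 - 1 / 4) * B := by
        linarith [mul_le_mul_of_nonpos_left hBA (sub_nonpos.2 hν)]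
  · calc min (4 * ν ^ 2) 1 * A ≤ 1 * A := by gcongr; exact min_le_right _ _
      _ ≤ A + (ν ^ 2 - 1 / 4) * B := by nlinarith

lemma add_mul_le_mul_of_le_four_mul (ν : ℝ) {A B : ℝ} (hA : 0 ≤ A) (hB : 0 ≤ B)
    (hBA : B ≤ 4 * A) : A + (ν ^ 2 - 1 / 4) * B ≤ (1 + |4 * ν ^ 2 - 1|) * A := by
  rcases le_total (ν ^ 2) (1 / 4) with hν | hν
  · nlinarith [abs_nonneg (4 * ν ^ 2 - 1)]
  · rw [abs_of_nonneg (by linarith)]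
    nlinarith

theorem stmt5_general (ν : ℝ)
    (S : Set ℝ) (hS : S = Ioi (0:ℝ) ∨ ∃ b : ℝ, 0 < b ∧ S = Ioo 0 b)
    (u u' : ℝ → ℂ) (hu' : MemLp u' 2 (volume.restrict S))
    (hu : ∀ x ∈ S, u x = ∫ t in (0:ℝ)..x, u' t) :
    IntegrableOn (fun x => ‖u x‖ ^ 2 / x ^ 2) S ∧
    min (4 * ν ^ 2) 1 * (∫ x in S, ‖u' x‖ ^ 2)
      ≤ (∫ x in S, ‖u' x‖ ^ 2) + (ν ^ 2 - 1/4) * ∫ x in S, ‖u x‖ ^ 2 / x ^ 2 ∧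
    (∫ x in S, ‖u' x‖ ^ 2) + (ν ^ 2 - 1/4) * ∫ x in S, ‖u x‖ ^ 2 / x ^ 2
      ≤ (1 + |4 * ν ^ 2 - 1|) * ∫ x in S, ‖u' x‖ ^ 2 := by
  obtain ⟨hSm, hS₀, hSIoc⟩ : MeasurableSet S ∧ S ⊆ Ioi 0 ∧ ∀ x ∈ S, Ioc 0 x ⊆ S := by
    rcases hS with rfl | ⟨b, -, rfl⟩
    · exact ⟨measurableSet_Ioi, subset_rfl, fun x _ t ht => ht.1⟩
    · exact ⟨measurableSet_Ioo, fun x hx => hx.1, fun x hx t ht => ⟨ht.1, ht.2.trans_lt hx.2⟩⟩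
  obtain ⟨hint, hhardy⟩ := integrableOn_norm_sq_div_sq_and_integral_le hSm hS₀ hSIoc hu' hu
  have hA : 0 ≤ ∫ x in S, ‖u' x‖ ^ 2 := integral_nonneg fun x => sq_nonneg _
  have hB : 0 ≤ ∫ x in S, ‖u x‖ ^ 2 / x ^ 2 := integral_nonneg fun x => by positivity
  exact ⟨hint, min_mul_le_add_mul_of_le_four_mul ν hA hB hhardy,
    add_mul_le_mul_of_le_four_mul ν hA hB hhardy⟩

/-- Let `ν ∈ (0,1)`, let `b ∈ (0,∞]` (the set `S` is `(0,b)` for finite `b > 0` or the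
half-line `(0,∞)`), and let `u(x) = ∫₀ˣ u'(t) dt` with `u' ∈ L²(0,b)`. Then the Bessel
quadratic form `𝔰_ν[u] = ∫₀ᵇ |u'|² + (ν²−1/4)∫₀ᵇ |u|²/x²` (which is finite) satisfies
`min{4ν²,1}·∫₀ᵇ|u'|² ≤ 𝔰_ν[u] ≤ (1 + |4ν²−1|)·∫₀ᵇ|u'|²`: the energy norm is equivalent
to the `H¹`-seminorm on functions vanishing at `0`. -/
theorem stmt5 (ν : ℝ) (hν : ν ∈ Ioo (0:ℝ) 1)
    (S : Set ℝ) (hS : S = Ioi (0:ℝ) ∨ ∃ b : ℝ, 0 < b ∧ S = Ioo 0 b)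
    (u u' : ℝ → ℂ) (hu' : MemLp u' 2 (volume.restrict S))
    (hu : ∀ x ∈ S, u x = ∫ t in (0:ℝ)..x, u' t) :
    IntegrableOn (fun x => ‖u x‖ ^ 2 / x ^ 2) S ∧
    min (4 * ν ^ 2) 1 * (∫ x in S, ‖u' x‖ ^ 2)
      ≤ (∫ x in S, ‖u' x‖ ^ 2) + (ν ^ 2 - 1/4) * ∫ x in S, ‖u x‖ ^ 2 / x ^ 2 ∧
    (∫ x in S, ‖u' x‖ ^ 2) + (ν ^ 2 - 1/4) * ∫ x in S, ‖u x‖ ^ 2 / x ^ 2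
      ≤ (1 + |4 * ν ^ 2 - 1|) * ∫ x in S, ‖u' x‖ ^ 2 :=
  stmt5_general ν S hS u u' hu' hu
end

section
/- For α ∈ (0, 1/2] define u_α : (0, 1/2) → ℝ by u_α(x) = x^{1/2}(−log x)^{−α}. Then ∫₀^{1/2} |u_α'(x)|² dx = ∞; in particular u_α does not belong to H¹ on any neighbourhood of 0. (Combined with the finiteness of ∫₀^{1/2}|u_α' − u_α/(2x)|² dx, this shows that the form domain of the Friedrichs extension of the Bessel operator with ν = 0 strictly contains H¹₀.) -/
open MeasureTheory Set Filter Topology Asymptotics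

/-! Both summands of `u_α' = x^{-1/2}(-log x)^{-α}(1/2 + α/(-log x))` are nonnegative, so near `0`,
where `-log x ≥ 1` and `2α ≤ 1`, `4 u_α'² ≥ x⁻¹(-log x)^{-2α} ≥ (x (-log x))⁻¹`. The latter is,
up to sign, the derivative of `log (-log x)`, which is unbounded at `0`; hence it is not
integrable on any right neighbourhood of `0`, and neither is `u_α'²`. -/

theorem hasDerivAt_rpow_mul_neg_log_rpow (p α : ℝ) {x : ℝ} (hx0 : 0 < x) (hx1 : x < 1) :
    HasDerivAt (fun y : ℝ => y ^ p * (-Real.log y) ^ (-α))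
      (x ^ (p - 1) * (-Real.log x) ^ (-α) * (p + α / -Real.log x)) x := by
  have hL : 0 < -Real.log x := neg_pos.2 (Real.log_neg hx0 hx1)
  have hlog : HasDerivAt (fun y => -Real.log y) (-x⁻¹) x := (Real.hasDerivAt_log hx0.ne').neg
  refine ((Real.hasDerivAt_rpow_const (Or.inl hx0.ne')).mul
    (hlog.rpow_const (p := -α) (Or.inl hL.ne'))).congr_deriv ?_
  rw [Real.rpow_sub_one hx0.ne', Real.rpow_sub_one hL.ne']
  field_simp

theorem inv_mul_neg_log_le_four_mul_deriv_sq {α x : ℝ} (hα : α ∈ Ioc (0:ℝ) (1/2)) (hx : 0 < x)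
    (hL : 1 ≤ -Real.log x) :
    (x * -Real.log x)⁻¹ ≤ 4 * deriv (fun y : ℝ => y ^ ((1:ℝ)/2) * (-Real.log y) ^ (-α)) x ^ 2 := by
  set L := -Real.log x
  have hx1 : x < 1 := by
    by_contra! h
    linarith [Real.log_nonneg h]
  rw [(hasDerivAt_rpow_mul_neg_log_rpow _ α hx hx1).deriv]
  have hsq : (x ^ ((1:ℝ)/2 - 1)) ^ 2 = x⁻¹ := by
    rw [← Real.rpow_natCast, ← Real.rpow_mul hx.le]; norm_num [Real.rpow_neg_one]
  have hLsq : L⁻¹ ≤ (L ^ (-α)) ^ 2 := by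
    rw [← Real.rpow_natCast, ← Real.rpow_mul (by linarith), ← Real.rpow_neg_one]
    exact Real.rpow_le_rpow_of_exponent_le hL (by push_cast; linarith [hα.2])
  have hfactor : 1 ≤ (2 * ((1:ℝ)/2 + α / L)) ^ 2 := by
    have : 0 ≤ α / L := div_nonneg hα.1.le (by linarith)
    nlinarith
  calc (x * L)⁻¹ = x⁻¹ * L⁻¹ * 1 := by rw [mul_inv, mul_one]
    _ ≤ (x ^ ((1:ℝ)/2 - 1)) ^ 2 * (L ^ (-α)) ^ 2 * (2 * ((1:ℝ)/2 + α / L)) ^ 2 := by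
      rw [hsq]; gcongr
    _ = _ := by ring

theorem tendsto_norm_log_neg_log_nhdsGT_zero :
    Tendsto (fun x : ℝ => ‖Real.log (-Real.log x)‖) (𝓝[>] 0) atTop :=
  tendsto_norm_atTop_atTop.comp
    (Real.tendsto_log_atTop.comp (tendsto_neg_atBot_atTop.comp Real.tendsto_log_nhdsGT_zero))

theorem hasDerivAt_log_neg_log {x : ℝ} (hx0 : 0 < x) (hx1 : x < 1) :
    HasDerivAt (fun y : ℝ => Real.log (-Real.log y)) (x * Real.log x)⁻¹ x := by
  have hL : -Real.log x ≠ 0 := (neg_pos.2 (Real.log_neg hx0 hx1)).ne'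
  have hlog : HasDerivAt (fun y => -Real.log y) (-x⁻¹) x := (Real.hasDerivAt_log hx0.ne').neg
  refine (hlog.log hL).congr_deriv ?_
  field_simp

theorem not_integrableOn_of_inv_mul_log_isBigO {F : Type*} [NormedAddCommGroup F]
    {g : ℝ → F} {k : Set ℝ} (hk : k ∈ 𝓝[>] 0)
    (hg : (fun x : ℝ => (x * Real.log x)⁻¹) =O[𝓝[>] 0] g) : ¬IntegrableOn g k := by
  have hderiv : ∀ᶠ x in 𝓝[>] (0:ℝ),
      HasDerivAt (fun y : ℝ => Real.log (-Real.log y)) (x * Real.log x)⁻¹ x := by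
    filter_upwards [Ioo_mem_nhdsGT one_pos] with x hx using hasDerivAt_log_neg_log hx.1 hx.2
  refine not_integrableOn_of_tendsto_norm_atTop_of_deriv_isBigO_filter _ hk
    (hderiv.mono fun x hx => hx.differentiableAt) tendsto_norm_log_neg_log_nhdsGT_zero ?_
  exact EventuallyEq.trans_isBigO (hderiv.mono fun x hx => hx.deriv) hg

theorem isBigO_inv_mul_log_deriv_sq {α : ℝ} (hα : α ∈ Ioc (0:ℝ) (1/2)) :
    (fun x : ℝ => (x * Real.log x)⁻¹) =O[𝓝[>] 0]
      fun x => deriv (fun y : ℝ => y ^ ((1:ℝ)/2) * (-Real.log y) ^ (-α)) x ^ 2 := by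
  have hL : ∀ᶠ x in 𝓝[>] (0:ℝ), 1 ≤ -Real.log x :=
    (tendsto_neg_atBot_atTop.comp Real.tendsto_log_nhdsGT_zero).eventually_ge_atTop 1
  refine IsBigO.of_bound 4 ?_
  filter_upwards [hL, self_mem_nhdsWithin] with x hxL hx
  rw [norm_inv, norm_mul, Real.norm_of_nonneg hx.le, Real.norm_of_nonpos (by linarith),
    Real.norm_of_nonneg (sq_nonneg _)]
  exact inv_mul_neg_log_le_four_mul_deriv_sq hα hx hxL

/-- For `α ∈ (0,1/2]`, the function `u_α(x) = x^{1/2}(−log x)^{−α}` on `(0,1/2)` satisfies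
`∫₀^{1/2} |u_α'(x)|² dx = ∞`; in particular `∫₀^ε |u_α'|² = ∞` for every `ε ∈ (0,1/2]`,
so `u_α` is not in `H¹` on any neighbourhood of `0`. -/
theorem stmt18 (α : ℝ) (hα : α ∈ Ioc (0:ℝ) (1/2)) :
    (∫⁻ x in Ioo (0:ℝ) (1/2),
      ENNReal.ofReal
        ((deriv (fun y : ℝ => y ^ ((1:ℝ)/2) * (-Real.log y) ^ (-α)) x) ^ 2) = ⊤) ∧
    ∀ ε : ℝ, ε ∈ Ioc (0:ℝ) (1/2) →
      ∫⁻ x in Ioo (0:ℝ) ε,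
        ENNReal.ofReal
          ((deriv (fun y : ℝ => y ^ ((1:ℝ)/2) * (-Real.log y) ^ (-α)) x) ^ 2) = ⊤ := by
  have hdiverges : ∀ ε : ℝ, 0 < ε → ∫⁻ x in Ioo (0:ℝ) ε,
      ENNReal.ofReal ((deriv (fun y : ℝ => y ^ ((1:ℝ)/2) * (-Real.log y) ^ (-α)) x) ^ 2) = ⊤ := by
    intro ε hε
    by_contra hfin
    refine not_integrableOn_of_inv_mul_log_isBigO (Ioo_mem_nhdsGT hε)
      (isBigO_inv_mul_log_deriv_sq hα) ?_
    exact (lintegral_ofReal_ne_top_iff_integrable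
      ((measurable_deriv _).pow_const 2).aestronglyMeasurable
      (ae_of_all _ fun _ => sq_nonneg _)).1 hfin
  exact ⟨hdiverges _ one_half_pos, fun ε hε => hdiverges ε hε.1⟩
end
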